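/- arXiv:1308.5796 — 6 statements merged into one kernel-verified Lean document; each statement's English description precedes it below -/
import Mathlib

section
/- Let (X,d,μ) be an upper doubling metric measure space. Then for every ρ ∈ [1,∞) there exists a positive constant C_ρ, depending on ρ, such that for all balls B ⊂ S in X with r_S ≤ ρ r_B, δ(B,S) ≤ C_ρ. -/
open MeasureTheory Metric Set
open scoped ENNReal NNReal BigOperators

noncomputable section

variable {X : Type*} [MetricSpace X] [MeasurableSpace X] [BorelSpace X]

/-- `(X,d,μ)` is upper doubling with dominating function `lam` and constant `Cl`:
`r ↦ lam x r` is non-decreasing (on `(0,∞)`), positive, and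
`μ(B(x,r)) ≤ lam x r ≤ Cl * lam x (r/2)`. -/
def UpperDoubling (μ : Measure X) (lam : X → ℝ → ℝ) (Cl : ℝ) : Prop :=
  1 < Cl ∧
  (∀ (x : X) (r : ℝ), 0 < r → 0 < lam x r) ∧
  (∀ (x : X) (r s : ℝ), 0 < r → r ≤ s → lam x r ≤ lam x s) ∧
  (∀ (x : X) (r : ℝ), 0 < r → μ (ball x r) ≤ ENNReal.ofReal (lam x r)) ∧
  (∀ (x : X) (r : ℝ), 0 < r → lam x r ≤ Cl * lam x (r / 2))

/-- the extra compatibility condition `lam x r ≤ Cl * lam y r` whenever `d(x,y) ≤ r`. -/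
def DomCompat (lam : X → ℝ → ℝ) (Cl : ℝ) : Prop :=
  ∀ (x y : X) (r : ℝ), 0 < r → dist x y ≤ r → lam x r ≤ Cl * lam y r

/-- `(X,d)` is geometrically doubling with constant `N0`. -/
def GeomDoubling (N0 : ℕ) : Prop :=
  ∀ (x : X) (r : ℝ), 0 < r → ∃ t : Finset X,
    t.card ≤ N0 ∧ ball x r ⊆ ⋃ y ∈ t, ball y (r / 2)

/-- size condition for the kernel `K`. -/
def SizeCond (lam : X → ℝ → ℝ) (K : X → X → ℂ) (C : ℝ) : Prop :=
  ∀ x y : X, x ≠ y → ‖K x y‖ ≤ C / lam x (dist x y)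

/-- Hörmander condition for the kernel `K`. -/
def HormanderCond (μ : Measure X) (K : X → X → ℂ) (C : ℝ) : Prop :=
  ∀ x x' : X, x ≠ x' →
    ∫ y in {y : X | 2 * dist x x' ≤ dist x y},
      (‖K x y - K x' y‖ + ‖K y x - K y x'‖) ∂μ ≤ C

/-- the truncated operator `T_ε`. -/
def Ttr (μ : Measure X) (K : X → X → ℂ) (ε : ℝ) (f : X → ℂ) (x : X) : ℂ :=
  ∫ y in {y : X | ε < dist x y}, K x y * f y ∂μ

/-- the maximal Calderón–Zygmund operator `T_*`. -/
def Tstar (μ : Measure X) (K : X → X → ℂ) (f : X → ℂ) (x : X) : ℝ :=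
  ⨆ ε : {ε : ℝ // 0 < ε}, ‖Ttr μ K ε.1 f x‖

/-- `f ∈ L^∞_b(μ)`: bounded with bounded support. -/
def LinfB (μ : Measure X) (f : X → ℂ) : Prop :=
  MemLp f ⊤ μ ∧ Bornology.IsBounded (Function.support f)

/-- the coefficient `δ(B,S)` for balls `B = B(xB,rB) ⊆ S = B(xS,rS)`. -/
def ballδ (μ : Measure X) (lam : X → ℝ → ℝ) (xB : X) (rB : ℝ) (xS : X) (rS : ℝ) : ℝ≥0∞ :=
  ∫⁻ x in ball xS (2 * rS) \ ball xB rB, ENNReal.ofReal (1 / lam xB (dist x xB)) ∂μ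

/-- the ball `B(x,r)` is `(α,β)`-doubling. -/
def IsDoubling (μ : Measure X) (α β : ℝ) (x : X) (r : ℝ) : Prop :=
  μ (ball x (α * r)) ≤ ENNReal.ofReal β * μ (ball x r)

/-- mean of `f` over the ball `B(x,r)`. -/
def mB (μ : Measure X) (f : X → ℝ) (x : X) (r : ℝ) : ℝ :=
  (μ (ball x r)).toReal⁻¹ * ∫ y in ball x r, f y ∂μ

open Classical in
/-- smallest `j` such that `6^j B(x,r)` is `(6,β)`-doubling (junk value `0` if none). -/
def jtilde (μ : Measure X) (β : ℝ) (x : X) (r : ℝ) : ℕ :=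
  if h : ∃ j : ℕ, IsDoubling μ 6 β x (6 ^ j * r) then Nat.find h else 0

/-- radius of the smallest `(6,β)`-doubling ball `B̃` of the form `6^j B(x,r)`. -/
def tildeRad (μ : Measure X) (β : ℝ) (x : X) (r : ℝ) : ℝ :=
  6 ^ (jtilde μ β x r) * r

/-- the sharp maximal function `M^♯`. -/
def sharpMax (μ : Measure X) (lam : X → ℝ → ℝ) (β : ℝ) (f : X → ℝ) (x : X) : ℝ :=
  (⨆ B : {B : X × ℝ // 0 < B.2 ∧ x ∈ ball B.1 B.2},
    (μ (ball B.1.1 (5 * B.1.2))).toReal⁻¹ *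
      ∫ y in ball B.1.1 B.1.2,
        |f y - mB μ f B.1.1 (tildeRad μ β B.1.1 B.1.2)| ∂μ) +
  (⨆ P : {P : (X × ℝ) × (X × ℝ) //
      0 < P.1.2 ∧ 0 < P.2.2 ∧ x ∈ ball P.1.1 P.1.2 ∧
      ball P.1.1 P.1.2 ⊆ ball P.2.1 P.2.2 ∧
      IsDoubling μ 6 β P.1.1 P.1.2 ∧ IsDoubling μ 6 β P.2.1 P.2.2},
    |mB μ f P.1.1.1 P.1.1.2 - mB μ f P.1.2.1 P.1.2.2| /
      (1 + (ballδ μ lam P.1.1.1 P.1.1.2 P.1.2.1 P.1.2.2).toReal))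

/-- the non-centered doubling maximal function `N`. -/
def Nmax (μ : Measure X) (β : ℝ) (f : X → ℝ) (x : X) : ℝ :=
  ⨆ B : {B : X × ℝ // 0 < B.2 ∧ x ∈ ball B.1 B.2 ∧ IsDoubling μ 6 β B.1 B.2},
    (μ (ball B.1.1 B.1.2)).toReal⁻¹ * ∫ y in ball B.1.1 B.1.2, |f y| ∂μ

/-- the maximal function `M_{r,(5)}`. -/
def Mr5 (μ : Measure X) (r : ℝ) (g : X → ℝ) (x : X) : ℝ :=
  ⨆ B : {B : X × ℝ // 0 < B.2 ∧ x ∈ ball B.1 B.2},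
    ((μ (ball B.1.1 (5 * B.1.2))).toReal⁻¹ *
      ∫ y in ball B.1.1 B.1.2, |g y| ^ r ∂μ) ^ (1 / r)

/-- the sharp maximal function `M_r^♯ f = (M^♯(|f|^r))^{1/r}`. -/
def MrSharp (μ : Measure X) (lam : X → ℝ → ℝ) (β r : ℝ) (g : X → ℝ) (x : X) : ℝ :=
  (sharpMax μ lam β (fun y => |g y| ^ r) x) ^ (1 / r)

/-- the Hardy–Littlewood type maximal function `M_(5)`. -/
def M5 (μ : Measure X) (g : X → ℂ) (x : X) : ℝ :=
  ⨆ B : {B : X × ℝ // 0 < B.2 ∧ x ∈ ball B.1 B.2},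
    (μ (ball B.1.1 (5 * B.1.2))).toReal⁻¹ * ∫ y in ball B.1.1 B.1.2, ‖g y‖ ∂μ

/-- the weak `L^{p,∞}(μ)` quasinorm. -/
def wkNorm (μ : Measure X) (g : X → ℝ) (p : ℝ) : ℝ≥0∞ :=
  ⨆ t : ℝ≥0, (t : ℝ≥0∞) * μ {x : X | (t : ℝ) < |g x|} ^ (1 / p)

/-- `ω_i := χ_{6B_i} / ∑_k χ_{6B_k}`. -/
def omegaCZ {ι : Type*} (xB : ι → X) (rB : ι → ℝ) (i : ι) (x : X) : ℝ :=
  Set.indicator (ball (xB i) (6 * rB i)) (fun _ => (1 : ℝ)) x /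
    ∑ᶠ k, Set.indicator (ball (xB k) (6 * rB k)) (fun _ => (1 : ℝ)) x

/-! Off `B` the integrand of `δ(B,S)` is at most `1 / λ(x_B, r_B)`, and the annulus `2S ∖ B` lies in
`B(x_B, 3 r_S) ⊆ 2ⁿ B` as soon as `2ⁿ ≥ 3ρ`. Iterating the doubling of `λ` bounds the measure of `2ⁿ B`
by `C_λⁿ λ(x_B, r_B)`, so `δ(B,S) ≤ C_λⁿ`. -/

namespace UpperDoubling

omit [BorelSpace X]

variable {μ : Measure X} {lam : X → ℝ → ℝ} {Cl : ℝ}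

theorem lam_two_pow_mul_le (h : UpperDoubling μ lam Cl) (x : X) {r : ℝ} (hr : 0 < r) (n : ℕ) :
    lam x (2 ^ n * r) ≤ Cl ^ n * lam x r := by
  induction n with
  | zero => simp
  | succ n ih =>
    have hstep : lam x (2 ^ (n + 1) * r) ≤ Cl * lam x (2 ^ n * r) := by
      have := h.2.2.2.2 x (2 ^ n * r * 2) (by positivity)
      rwa [mul_div_cancel_right₀ _ two_ne_zero, ← mul_right_comm, ← pow_succ] at this
    calc lam x (2 ^ (n + 1) * r) ≤ Cl * lam x (2 ^ n * r) := hstep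
      _ ≤ Cl * (Cl ^ n * lam x r) := by gcongr; linarith [h.1]
      _ = Cl ^ (n + 1) * lam x r := by ring

theorem measure_ball_two_pow_mul_le (h : UpperDoubling μ lam Cl) (x : X) {r : ℝ} (hr : 0 < r)
    (n : ℕ) : μ (ball x (2 ^ n * r)) ≤ ENNReal.ofReal (Cl ^ n * lam x r) :=
  (h.2.2.2.1 x _ (by positivity)).trans
    (ENNReal.ofReal_le_ofReal (h.lam_two_pow_mul_le x hr n))

theorem setLIntegral_diff_ball_le (h : UpperDoubling μ lam Cl) (s : Set X) (x : X) {r : ℝ}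
    (hr : 0 < r) :
    ∫⁻ y in s \ ball x r, ENNReal.ofReal (1 / lam x (dist y x)) ∂μ ≤
      ENNReal.ofReal (1 / lam x r) * μ s := by
  have hpointwise : ∀ y ∈ s \ ball x r,
      ENNReal.ofReal (1 / lam x (dist y x)) ≤ ENNReal.ofReal (1 / lam x r) := by
    intro y hy
    have hry : r ≤ dist y x := not_lt.1 hy.2
    exact ENNReal.ofReal_le_ofReal
      (one_div_le_one_div_of_le (h.2.1 x r hr) (h.2.2.1 x r _ hr hry))
  calc ∫⁻ y in s \ ball x r, ENNReal.ofReal (1 / lam x (dist y x)) ∂μ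
      ≤ ∫⁻ _ in s \ ball x r, ENNReal.ofReal (1 / lam x r) ∂μ :=
        setLIntegral_mono measurable_const hpointwise
    _ ≤ ENNReal.ofReal (1 / lam x r) * μ s := by
        rw [setLIntegral_const]
        gcongr
        exact sdiff_subset

theorem ballδ_le_pow (h : UpperDoubling μ lam Cl) {xB xS : X} {rB rS : ℝ} (hrB : 0 < rB)
    (hcenter : dist xB xS < rS) {n : ℕ} (hn : 3 * rS ≤ 2 ^ n * rB) :
    ballδ μ lam xB rB xS rS ≤ ENNReal.ofReal (Cl ^ n) := by
  have hlam : 0 < lam xB rB := h.2.1 xB rB hrB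
  have hsub : ball xS (2 * rS) ⊆ ball xB (2 ^ n * rB) :=
    ball_subset_ball' (by rw [dist_comm]; linarith)
  calc ballδ μ lam xB rB xS rS
      ≤ ENNReal.ofReal (1 / lam xB rB) * μ (ball xS (2 * rS)) :=
        h.setLIntegral_diff_ball_le _ xB hrB
    _ ≤ ENNReal.ofReal (1 / lam xB rB) * ENNReal.ofReal (Cl ^ n * lam xB rB) := by
        gcongr
        exact (measure_mono hsub).trans (h.measure_ball_two_pow_mul_le xB hrB n)
    _ = ENNReal.ofReal (Cl ^ n) := by
        rw [← ENNReal.ofReal_mul (by positivity)]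
        field_simp

end UpperDoubling

theorem delta_bounded_of_comparable_radii_general
    (μ : Measure X) (lam : X → ℝ → ℝ) (Cl : ℝ)
    (hud : UpperDoubling μ lam Cl) :
    ∀ ρ : ℝ, 1 ≤ ρ → ∃ Cρ : ℝ, 0 < Cρ ∧
      ∀ (xB xS : X) (rB rS : ℝ), 0 < rB → 0 < rS →
        ball xB rB ⊆ ball xS rS → rS ≤ ρ * rB →
        ballδ μ lam xB rB xS rS ≤ ENNReal.ofReal Cρ := by
  intro ρ _
  obtain ⟨n, hn⟩ := pow_unbounded_of_one_lt (3 * ρ) (one_lt_two : (1 : ℝ) < 2)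
  refine ⟨Cl ^ n, pow_pos (zero_lt_one.trans hud.1) n, ?_⟩
  intro xB xS rB rS hrB _ hBS hrS
  have hradii : 3 * rS ≤ 2 ^ n * rB := by nlinarith
  exact hud.ballδ_le_pow hrB (hBS (mem_ball_self hrB)) hradii

theorem delta_bounded_of_comparable_radii
    (μ : Measure X) (lam : X → ℝ → ℝ) (Cl : ℝ)
    (hud : UpperDoubling μ lam Cl) (hdc : DomCompat lam Cl) :
    ∀ ρ : ℝ, 1 ≤ ρ → ∃ Cρ : ℝ, 0 < Cρ ∧
      ∀ (xB xS : X) (rB rS : ℝ), 0 < rB → 0 < rS →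
        ball xB rB ⊆ ball xS rS → rS ≤ ρ * rB →
        ballδ μ lam xB rB xS rS ≤ ENNReal.ofReal Cρ :=
  delta_bounded_of_comparable_radii_general μ lam Cl hud

end
end

section
/- Let (X,d,μ) be an upper doubling, geometrically doubling metric measure space. For every α ∈ (1,∞) and every fixed β_α > max{α^n, α^ν}, where ν := log₂ C_λ and n := log₂ N₀, there exists a positive constant C_α, depending on α, such that for every ball B ⊂ X, δ(B, B̃^α) ≤ C_α, where B̃^α denotes the smallest (α,β_α)-doubling ball of the form α^j B with j ∈ ℤ≥0 (such a ball exists since β_α > C_λ^{log₂ α}). -/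
open MeasureTheory Metric Set
open scoped ENNReal NNReal BigOperators

noncomputable section

variable {X : Type*} [MetricSpace X] [MeasurableSpace X] [BorelSpace X]

/-!
Cut the annulus `2B̃ ∖ B`, `B̃ = α^j B`, into the shells `α^(k+1)B ∖ α^k B` (`k < j`) and the last
shell `2B̃ ∖ B̃`. On the shell at radius `α^k r` the integrand is at most `1/λ(x, α^k r)`, so the
shell contributes at most `μ(α^(k+1)B)/λ(x, α^k r)`. Since none of the balls `α^k B`, `k < j`, is
doubling, `μ(α^(k+1)B) ≤ β^-(j-k-1) μ(B̃) ≤ β^-(j-k-1) λ(x, α^j r)`, while the upper doubling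
property gives `λ(x, α^j r) ≤ C_λ α^((j-k)ν) λ(x, α^k r)`. The shells thus contribute a geometric
series of ratio `α^ν/β < 1`, `ν = log₂ C_λ`; the last shell contributes at most `C_λ`.
-/

section Dominating

variable {Y : Type*} {lam : Y → ℝ → ℝ} {Cl : ℝ}

lemma le_pow_mul_div_two_pow_of_doubling (hCl : 0 ≤ Cl)
    (hdoub : ∀ (x : Y) (r : ℝ), 0 < r → lam x r ≤ Cl * lam x (r / 2)) (x : Y) (m : ℕ)
    {s : ℝ} (hs : 0 < s) : lam x s ≤ Cl ^ m * lam x (s / 2 ^ m) := by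
  induction m with
  | zero => simp
  | succ m ih =>
    calc lam x s ≤ Cl ^ m * lam x (s / 2 ^ m) := ih
      _ ≤ Cl ^ m * (Cl * lam x (s / 2 ^ m / 2)) := by gcongr; exact hdoub x _ (by positivity)
      _ = Cl ^ (m + 1) * lam x (s / 2 ^ (m + 1)) := by rw [div_div, ← pow_succ]; ring

lemma rpow_logb_comm (b : ℝ) {a t : ℝ} (ha : 0 < a) (ht : 0 < t) :
    a ^ Real.logb b t = t ^ Real.logb b a := by
  rw [Real.rpow_def_of_pos ha, Real.rpow_def_of_pos ht, Real.logb, Real.logb]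
  ring_nf

lemma le_mul_rpow_logb_mul_of_doubling (hCl : 1 ≤ Cl) (hpos : ∀ (x : Y) (r : ℝ), 0 < r → 0 < lam x r)
    (hmono : ∀ (x : Y) (r s : ℝ), 0 < r → r ≤ s → lam x r ≤ lam x s)
    (hdoub : ∀ (x : Y) (r : ℝ), 0 < r → lam x r ≤ Cl * lam x (r / 2))
    (x : Y) {a b : ℝ} (ha : 0 < a) (hab : a ≤ b) :
    lam x b ≤ Cl * (b / a) ^ Real.logb 2 Cl * lam x a := by
  have hb : 0 < b := ha.trans_le hab
  set t := b / a
  have ht : 0 < t := div_pos hb ha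
  have hlogt : 0 ≤ Real.logb 2 t := Real.logb_nonneg one_lt_two ((one_le_div ha).2 hab)
  -- halve `b` exactly `m := ⌈log₂ t⌉` times to get below `a`
  set m := ⌈Real.logb 2 t⌉₊
  have hhalf : b / 2 ^ m ≤ a := by
    have : t ≤ 2 ^ m := by
      calc t = 2 ^ Real.logb 2 t := (Real.rpow_logb two_pos (by norm_num) ht).symm
        _ ≤ 2 ^ (m : ℝ) := Real.rpow_le_rpow_of_exponent_le one_le_two (Nat.le_ceil _)
        _ = 2 ^ m := Real.rpow_natCast 2 m
    rw [div_le_iff₀ (by positivity)]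
    rwa [div_le_iff₀ ha, mul_comm] at this
  have hpow : Cl ^ m ≤ Cl * t ^ Real.logb 2 Cl := by
    calc Cl ^ m = Cl ^ (m : ℝ) := (Real.rpow_natCast Cl m).symm
      _ ≤ Cl ^ (Real.logb 2 t + 1) :=
        Real.rpow_le_rpow_of_exponent_le hCl (Nat.ceil_lt_add_one hlogt).le
      _ = Cl * t ^ Real.logb 2 Cl := by
        rw [Real.rpow_add_one (by positivity), rpow_logb_comm 2 (by positivity) ht, mul_comm]
  calc lam x b ≤ Cl ^ m * lam x (b / 2 ^ m) :=
        le_pow_mul_div_two_pow_of_doubling (zero_le_one.trans hCl) hdoub x m hb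
    _ ≤ Cl ^ m * lam x a := by gcongr; exact hmono x _ _ (by positivity) hhalf
    _ ≤ Cl * t ^ Real.logb 2 Cl * lam x a := by gcongr; exact (hpos x a ha).le

end Dominating

lemma le_ofReal_inv_pow_mul_of_mul_le_succ {a : ℕ → ℝ≥0∞} {β : ℝ} {j : ℕ} (hβ : 0 < β)
    (h : ∀ k < j, ENNReal.ofReal β * a k ≤ a (k + 1)) :
    ∀ k ≤ j, a k ≤ ENNReal.ofReal (β⁻¹ ^ (j - k)) * a j := by
  suffices ∀ m k, k + m = j → a k ≤ ENNReal.ofReal (β⁻¹ ^ m) * a j from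
    fun k hk => this (j - k) k (by omega)
  intro m
  induction m with
  | zero => intro k hk; simp [← hk]
  | succ m ih =>
    intro k hk
    have hβ' : ENNReal.ofReal β ≠ 0 := ENNReal.ofReal_ne_zero_iff.2 hβ
    calc a k ≤ ENNReal.ofReal β⁻¹ * a (k + 1) := by
          rw [ENNReal.ofReal_inv_of_pos hβ, ← ENNReal.mul_le_iff_le_inv hβ' ENNReal.ofReal_ne_top]
          exact h k (by omega)
      _ ≤ ENNReal.ofReal β⁻¹ * (ENNReal.ofReal (β⁻¹ ^ m) * a j) := by
          gcongr; exact ih (k + 1) (by omega)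
      _ = ENNReal.ofReal (β⁻¹ ^ (m + 1)) * a j := by
          rw [← mul_assoc, ← ENNReal.ofReal_mul (by positivity), pow_succ']

section Annuli

variable {Ω : Type*} [MeasurableSpace Ω] {μ : Measure Ω}

lemma setLIntegral_diff_le_add (f : Ω → ℝ≥0∞) (A B C : Set Ω) :
    ∫⁻ y in A \ C, f y ∂μ ≤ ∫⁻ y in B \ C, f y ∂μ + ∫⁻ y in A \ B, f y ∂μ := by
  refine (lintegral_mono_set fun y (hy : y ∈ A \ C) => ?_).trans (lintegral_union_le f _ _)
  obtain ⟨hA, hC⟩ := hy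
  by_cases hB : y ∈ B
  exacts [Or.inl ⟨hB, hC⟩, Or.inr ⟨hA, hB⟩]

lemma setLIntegral_diff_le_sum (f : Ω → ℝ≥0∞) (S : ℕ → Set Ω) (n : ℕ) :
    ∫⁻ y in S n \ S 0, f y ∂μ ≤ ∑ k ∈ Finset.range n, ∫⁻ y in S (k + 1) \ S k, f y ∂μ := by
  induction n with
  | zero => simp
  | succ n ih =>
    rw [Finset.sum_range_succ]
    exact (setLIntegral_diff_le_add f _ (S n) _).trans (by gcongr)

end Annuli

section Shells

variable {μ : Measure X} {lam : X → ℝ → ℝ} {Cl : ℝ}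

lemma setLIntegral_annulus_le (hpos : ∀ (x : X) (r : ℝ), 0 < r → 0 < lam x r)
    (hmono : ∀ (x : X) (r s : ℝ), 0 < r → r ≤ s → lam x r ≤ lam x s)
    (x : X) {ρ : ℝ} (hρ : 0 < ρ) (R : ℝ) :
    ∫⁻ y in ball x R \ ball x ρ, ENNReal.ofReal (1 / lam x (dist y x)) ∂μ
      ≤ ENNReal.ofReal (1 / lam x ρ) * μ (ball x R) := by
  calc ∫⁻ y in ball x R \ ball x ρ, ENNReal.ofReal (1 / lam x (dist y x)) ∂μ
      ≤ ∫⁻ _ in ball x R \ ball x ρ, ENNReal.ofReal (1 / lam x ρ) ∂μ := by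
        refine setLIntegral_mono' (measurableSet_ball.diff measurableSet_ball) fun y hy => ?_
        have hρy : ρ ≤ dist y x := not_lt.1 hy.2
        exact ENNReal.ofReal_le_ofReal
          (one_div_le_one_div_of_le (hpos x ρ hρ) (hmono x ρ _ hρ hρy))
    _ = ENNReal.ofReal (1 / lam x ρ) * μ (ball x R \ ball x ρ) := setLIntegral_const _ _
    _ ≤ ENNReal.ofReal (1 / lam x ρ) * μ (ball x R) := by gcongr; exact sdiff_subset

lemma setLIntegral_shell_le (hud : UpperDoubling μ lam Cl) {α β : ℝ} (hα : 1 ≤ α) (hβ : 0 < β)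
    (x : X) {s : ℝ} (hs : 0 < s) (m : ℕ)
    (hdecay : μ (ball x (α * s)) ≤ ENNReal.ofReal (β⁻¹ ^ m) * μ (ball x (α ^ (m + 1) * s))) :
    ∫⁻ y in ball x (α * s) \ ball x s, ENNReal.ofReal (1 / lam x (dist y x)) ∂μ
      ≤ ENNReal.ofReal (Cl * α ^ Real.logb 2 Cl * (α ^ Real.logb 2 Cl / β) ^ m) := by
  obtain ⟨hCl, hpos, hmono, hmeas, hdoub⟩ := hud
  set ν := Real.logb 2 Cl
  have hlam := hpos x s hs
  have hscale : lam x (α ^ (m + 1) * s) ≤ Cl * (α ^ ν) ^ (m + 1) * lam x s := by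
    have := le_mul_rpow_logb_mul_of_doubling hCl.le hpos hmono hdoub x hs
      (le_mul_of_one_le_left hs.le (one_le_pow₀ (n := m + 1) hα))
    rwa [mul_div_cancel_right₀ _ hs.ne', ← Real.rpow_pow_comm (by positivity)] at this
  have hreal : 1 / lam x s * (β⁻¹ ^ m * lam x (α ^ (m + 1) * s))
      ≤ Cl * α ^ ν * (α ^ ν / β) ^ m := by
    calc 1 / lam x s * (β⁻¹ ^ m * lam x (α ^ (m + 1) * s))
        ≤ 1 / lam x s * (β⁻¹ ^ m * (Cl * (α ^ ν) ^ (m + 1) * lam x s)) := by gcongr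
      _ = Cl * α ^ ν * (α ^ ν / β) ^ m := by field_simp; ring
  calc ∫⁻ y in ball x (α * s) \ ball x s, ENNReal.ofReal (1 / lam x (dist y x)) ∂μ
      ≤ ENNReal.ofReal (1 / lam x s) * μ (ball x (α * s)) :=
        setLIntegral_annulus_le hpos hmono x hs _
    _ ≤ ENNReal.ofReal (1 / lam x s) *
          (ENNReal.ofReal (β⁻¹ ^ m) * ENNReal.ofReal (lam x (α ^ (m + 1) * s))) := by
        gcongr
        exact hdecay.trans (by gcongr; exact hmeas x _ (by positivity))
    _ = ENNReal.ofReal (1 / lam x s * (β⁻¹ ^ m * lam x (α ^ (m + 1) * s))) := by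
        rw [ENNReal.ofReal_mul (by positivity), ENNReal.ofReal_mul (by positivity)]
    _ ≤ _ := ENNReal.ofReal_le_ofReal hreal

lemma setLIntegral_outer_shell_le (hud : UpperDoubling μ lam Cl) (x : X) {s : ℝ} (hs : 0 < s) :
    ∫⁻ y in ball x (2 * s) \ ball x s, ENNReal.ofReal (1 / lam x (dist y x)) ∂μ
      ≤ ENNReal.ofReal Cl := by
  obtain ⟨-, hpos, hmono, hmeas, hdoub⟩ := hud
  have hlam := hpos x s hs
  have hdoub' : lam x (2 * s) ≤ Cl * lam x s := by
    simpa using hdoub x (2 * s) (by positivity)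
  calc ∫⁻ y in ball x (2 * s) \ ball x s, ENNReal.ofReal (1 / lam x (dist y x)) ∂μ
      ≤ ENNReal.ofReal (1 / lam x s) * μ (ball x (2 * s)) :=
        setLIntegral_annulus_le hpos hmono x hs _
    _ ≤ ENNReal.ofReal (1 / lam x s) * ENNReal.ofReal (lam x (2 * s)) := by
        gcongr; exact hmeas x _ (by positivity)
    _ = ENNReal.ofReal (1 / lam x s * lam x (2 * s)) := by
        rw [ENNReal.ofReal_mul (by positivity)]
    _ ≤ ENNReal.ofReal (1 / lam x s * (Cl * lam x s)) := by gcongr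
    _ = ENNReal.ofReal Cl := by field_simp

lemma setLIntegral_annulus_le_of_not_doubling (hud : UpperDoubling μ lam Cl) {α β : ℝ}
    (hα : 1 ≤ α) (hβ : α ^ Real.logb 2 Cl < β) (x : X) {r : ℝ} (hr : 0 < r) {j : ℕ}
    (hnot : ∀ k < j, ¬ IsDoubling μ α β x (α ^ k * r)) :
    ∫⁻ y in ball x (α ^ j * r) \ ball x r, ENNReal.ofReal (1 / lam x (dist y x)) ∂μ
      ≤ ENNReal.ofReal (Cl * α ^ Real.logb 2 Cl / (1 - α ^ Real.logb 2 Cl / β)) := by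
  set ν := Real.logb 2 Cl
  set q := α ^ ν / β
  have hβ0 : 0 < β := (Real.rpow_pos_of_pos (by linarith) ν).trans hβ
  have hq0 : 0 ≤ q := by positivity
  have hq1 : q < 1 := (div_lt_one hβ0).2 hβ
  have hCl : 0 < Cl := by linarith [hud.1]
  have hdecay := le_ofReal_inv_pow_mul_of_mul_le_succ (a := fun k => μ (ball x (α ^ k * r))) hβ0
    fun k hk => by
      have := hnot k hk
      rw [IsDoubling, not_le] at this
      rw [pow_succ', mul_assoc]
      exact this.le
  have hgeom : ∑ k ∈ Finset.range j, q ^ (j - (k + 1)) ≤ 1 / (1 - q) := by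
    calc ∑ k ∈ Finset.range j, q ^ (j - (k + 1)) = ∑ k ∈ Finset.range j, q ^ k := by
          rw [← Finset.sum_range_reflect]
          exact Finset.sum_congr rfl fun k hk => by
            rw [Finset.mem_range] at hk; congr 1; omega
      _ ≤ q ^ 0 / (1 - q) := by
          rw [Finset.range_eq_Ico]; exact geom_sum_Ico_le_of_lt_one hq0 hq1
      _ = 1 / (1 - q) := by rw [pow_zero]
  calc ∫⁻ y in ball x (α ^ j * r) \ ball x r, ENNReal.ofReal (1 / lam x (dist y x)) ∂μ
      ≤ ∑ k ∈ Finset.range j, ∫⁻ y in ball x (α ^ (k + 1) * r) \ ball x (α ^ k * r),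
          ENNReal.ofReal (1 / lam x (dist y x)) ∂μ := by
        simpa using setLIntegral_diff_le_sum (μ := μ) _ (fun k => ball x (α ^ k * r)) j
    _ ≤ ∑ k ∈ Finset.range j, ENNReal.ofReal (Cl * α ^ ν * q ^ (j - (k + 1))) := by
        gcongr with k hk
        have hkj := Finset.mem_range.1 hk
        have hradius : α ^ (j - (k + 1) + 1) * (α ^ k * r) = α ^ j * r := by
          rw [← mul_assoc, ← pow_add]; congr 2; omega
        rw [pow_succ', mul_assoc]
        refine setLIntegral_shell_le hud hα hβ0 x (by positivity) _ ?_
        rw [hradius, ← mul_assoc, ← pow_succ']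
        exact hdecay (k + 1) hkj
    _ = ENNReal.ofReal (Cl * α ^ ν * ∑ k ∈ Finset.range j, q ^ (j - (k + 1))) := by
        rw [Finset.mul_sum, ENNReal.ofReal_sum_of_nonneg fun k _ => by positivity]
    _ ≤ ENNReal.ofReal (Cl * α ^ ν / (1 - q)) := by
        rw [← mul_one_div]; gcongr

end Shells

theorem delta_to_smallest_doubling_ball_general
    (μ : Measure X) (lam : X → ℝ → ℝ) (Cl : ℝ) (N0 : ℕ)
    (hud : UpperDoubling μ lam Cl)
    (α : ℝ) (hα : 1 < α) (βα : ℝ)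
    (hβα : max (α ^ Real.logb 2 N0) (α ^ Real.logb 2 Cl) < βα) :
    ∃ Cα : ℝ, 0 < Cα ∧ ∀ (x : X) (r : ℝ), 0 < r → ∀ j : ℕ,
      IsDoubling μ α βα x (α ^ j * r) →
      (∀ k : ℕ, k < j → ¬ IsDoubling μ α βα x (α ^ k * r)) →
      ballδ μ lam x r x (α ^ j * r) ≤ ENNReal.ofReal Cα := by
  have hβ : α ^ Real.logb 2 Cl < βα := (le_max_right _ _).trans_lt hβα
  have hβ0 : 0 < βα := (Real.rpow_pos_of_pos (by linarith) _).trans hβ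
  have hq : 0 < 1 - α ^ Real.logb 2 Cl / βα := sub_pos.2 ((div_lt_one hβ0).2 hβ)
  have hCl : 0 < Cl := by linarith [hud.1]
  have hinner : 0 < Cl * α ^ Real.logb 2 Cl / (1 - α ^ Real.logb 2 Cl / βα) :=
    div_pos (mul_pos hCl (Real.rpow_pos_of_pos (by linarith) _)) hq
  refine ⟨_, add_pos hinner hCl, fun x r hr j _ hnot => ?_⟩
  calc ballδ μ lam x r x (α ^ j * r)
      ≤ ∫⁻ y in ball x (α ^ j * r) \ ball x r, ENNReal.ofReal (1 / lam x (dist y x)) ∂μ +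
          ∫⁻ y in ball x (2 * (α ^ j * r)) \ ball x (α ^ j * r),
            ENNReal.ofReal (1 / lam x (dist y x)) ∂μ :=
        setLIntegral_diff_le_add _ _ _ _
    _ ≤ ENNReal.ofReal (Cl * α ^ Real.logb 2 Cl / (1 - α ^ Real.logb 2 Cl / βα)) +
          ENNReal.ofReal Cl :=
        add_le_add (setLIntegral_annulus_le_of_not_doubling hud hα.le hβ x hr hnot)
          (setLIntegral_outer_shell_le hud x (by positivity))
    _ = ENNReal.ofReal (Cl * α ^ Real.logb 2 Cl / (1 - α ^ Real.logb 2 Cl / βα) + Cl) :=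
        (ENNReal.ofReal_add hinner.le hCl.le).symm

theorem delta_to_smallest_doubling_ball
    (μ : Measure X) (lam : X → ℝ → ℝ) (Cl : ℝ) (N0 : ℕ)
    (hud : UpperDoubling μ lam Cl) (hdc : DomCompat lam Cl)
    (hgd : GeomDoubling (X := X) N0)
    (α : ℝ) (hα : 1 < α) (βα : ℝ)
    (hβα : max (α ^ Real.logb 2 N0) (α ^ Real.logb 2 Cl) < βα) :
    ∃ Cα : ℝ, 0 < Cα ∧ ∀ (x : X) (r : ℝ), 0 < r → ∀ j : ℕ,
      IsDoubling μ α βα x (α ^ j * r) →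
      (∀ k : ℕ, k < j → ¬ IsDoubling μ α βα x (α ^ k * r)) →
      ballδ μ lam x r x (α ^ j * r) ≤ ENNReal.ofReal Cα :=
  delta_to_smallest_doubling_ball_general μ lam Cl N0 hud α hα βα hβα

end
end

section
/- Let (X,d,μ) be an upper doubling metric measure space. Then there exists a positive constant c such that for all balls B ⊂ R ⊂ S in X, δ(B,S) ≤ δ(B,R) + c δ(R,S); moreover, if B and R are concentric, then δ(B,S) ≤ δ(B,R) + δ(R,S). -/
open MeasureTheory Metric Set
open scoped ENNReal NNReal BigOperators

noncomputable section

variable {X : Type*} [MetricSpace X] [MeasurableSpace X] [BorelSpace X]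

/-
Split `2S \ B` into `2R \ B`, which lies in the domain of `δ(B,R)`, and `2S \ 2R`. On the latter
`d(x, x_B) ≥ d(x, x_R) / 2 ≥ r_R ≥ d(x_B, x_R)`, so one halving of the radius and one change of
centre give `λ(x_R, d(x, x_R)) ≤ C_λ² λ(x_B, d(x, x_B))`; since `2S \ 2R ⊆ 2S \ R`, the integral
over `2S \ 2R` is at most `C_λ² δ(R,S)`. For concentric balls the two integrands coincide and
the constant is `1`.
-/

lemma half_dist_le_dist_of_dist_le {α : Type*} [PseudoMetricSpace α] {x y z : α} {r : ℝ}
    (hyz : dist y z ≤ r) (hxz : 2 * r ≤ dist x z) : dist x z / 2 ≤ dist x y := by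
  linarith [dist_triangle x y z]

lemma ballδ_le_add_mul_of_le_mul (μ : Measure X) (lam : X → ℝ → ℝ) {xB xR xS : X}
    {rB rR rS : ℝ} {C : ℝ≥0∞} (hC : C ≠ ⊤) (hrR : 0 ≤ rR)
    (h : ∀ x ∈ ball xS (2 * rS) \ ball xR (2 * rR),
      ENNReal.ofReal (1 / lam xB (dist x xB)) ≤ C * ENNReal.ofReal (1 / lam xR (dist x xR))) :
    ballδ μ lam xB rB xS rS ≤ ballδ μ lam xB rB xR rR + C * ballδ μ lam xR rR xS rS := by
  have hsplit : ball xS (2 * rS) \ ball xB rB ⊆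
      (ball xR (2 * rR) \ ball xB rB) ∪ (ball xS (2 * rS) \ ball xR (2 * rR)) := by
    intro x hx
    by_cases hxR : x ∈ ball xR (2 * rR)
    · exact Or.inl ⟨hxR, hx.2⟩
    · exact Or.inr ⟨hx.1, hxR⟩
  have hfar : ball xS (2 * rS) \ ball xR (2 * rR) ⊆ ball xS (2 * rS) \ ball xR rR :=
    sdiff_subset_sdiff_right (ball_subset_ball (by linarith))
  unfold ballδ
  calc ∫⁻ x in ball xS (2 * rS) \ ball xB rB, ENNReal.ofReal (1 / lam xB (dist x xB)) ∂μ
      ≤ (∫⁻ x in ball xR (2 * rR) \ ball xB rB, ENNReal.ofReal (1 / lam xB (dist x xB)) ∂μ)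
        + ∫⁻ x in ball xS (2 * rS) \ ball xR (2 * rR),
            ENNReal.ofReal (1 / lam xB (dist x xB)) ∂μ :=
        (lintegral_mono_set hsplit).trans (lintegral_union_le _ _ _)
    _ ≤ (∫⁻ x in ball xR (2 * rR) \ ball xB rB, ENNReal.ofReal (1 / lam xB (dist x xB)) ∂μ)
        + C * ∫⁻ x in ball xS (2 * rS) \ ball xR (2 * rR),
            ENNReal.ofReal (1 / lam xR (dist x xR)) ∂μ := by
        rw [← lintegral_const_mul' _ _ hC]
        exact add_le_add le_rfl (setLIntegral_mono' (measurableSet_ball.diff measurableSet_ball) h)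
    _ ≤ _ := by gcongr

section

variable {μ : Measure X} {lam : X → ℝ → ℝ} {Cl : ℝ}

omit [BorelSpace X] in
lemma UpperDoubling.lam_le_sq_mul_of_far (hud : UpperDoubling μ lam Cl) (hdc : DomCompat lam Cl)
    {x y z : X} {r : ℝ} (hr : 0 < r) (hyz : dist y z ≤ r) (hxz : 2 * r ≤ dist x z) :
    lam z (dist x z) ≤ Cl ^ 2 * lam y (dist x y) := by
  obtain ⟨hCl, -, hmono, -, hdoub⟩ := hud
  have hhalf := half_dist_le_dist_of_dist_le hyz hxz
  have hxy : 0 < dist x y := by linarith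
  calc lam z (dist x z) ≤ Cl * lam z (dist x z / 2) := hdoub _ _ (by linarith)
    _ ≤ Cl * lam z (dist x y) := by gcongr; exact hmono _ _ _ (by linarith) hhalf
    _ ≤ Cl * (Cl * lam y (dist x y)) := by
        gcongr
        exact hdc z y _ hxy (by rw [dist_comm]; linarith)
    _ = Cl ^ 2 * lam y (dist x y) := by ring

omit [BorelSpace X] in
lemma UpperDoubling.ofReal_inv_lam_le_of_far (hud : UpperDoubling μ lam Cl)
    (hdc : DomCompat lam Cl) {x y z : X} {r : ℝ} (hr : 0 < r) (hyz : dist y z ≤ r)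
    (hxz : 2 * r ≤ dist x z) :
    ENNReal.ofReal (1 / lam y (dist x y)) ≤
      ENNReal.ofReal (Cl ^ 2) * ENNReal.ofReal (1 / lam z (dist x z)) := by
  have hy := hud.2.1 y (dist x y) (by linarith [half_dist_le_dist_of_dist_le hyz hxz])
  have hz := hud.2.1 z (dist x z) (by linarith)
  rw [← ENNReal.ofReal_mul (by positivity), mul_one_div]
  refine ENNReal.ofReal_le_ofReal ?_
  rw [div_le_div_iff₀ hy hz, one_mul]
  exact hud.lam_le_sq_mul_of_far hdc hr hyz hxz

end

theorem delta_triangle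
    (μ : Measure X) (lam : X → ℝ → ℝ) (Cl : ℝ)
    (hud : UpperDoubling μ lam Cl) (hdc : DomCompat lam Cl) :
    ∃ c : ℝ, 0 < c ∧
      ∀ (xB xR xS : X) (rB rR rS : ℝ), 0 < rB → 0 < rR → 0 < rS →
        ball xB rB ⊆ ball xR rR → ball xR rR ⊆ ball xS rS →
        (ballδ μ lam xB rB xS rS ≤
          ballδ μ lam xB rB xR rR + ENNReal.ofReal c * ballδ μ lam xR rR xS rS) ∧
        (xB = xR →
          ballδ μ lam xB rB xS rS ≤
            ballδ μ lam xB rB xR rR + ballδ μ lam xR rR xS rS) := by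
  have hCl : 0 < Cl := one_pos.trans hud.1
  refine ⟨Cl ^ 2, by positivity, fun xB xR xS rB rR rS hrB hrR _ hBR _ => ⟨?_, ?_⟩⟩
  · have hxBR : dist xB xR ≤ rR := (hBR (mem_ball_self hrB)).le
    exact ballδ_le_add_mul_of_le_mul μ lam ENNReal.ofReal_ne_top hrR.le fun x hx =>
      hud.ofReal_inv_lam_le_of_far hdc hrR hxBR (not_lt.mp hx.2)
  · rintro rfl
    simpa using ballδ_le_add_mul_of_le_mul μ lam ENNReal.one_ne_top hrR.le fun x _ => by
      rw [one_mul]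
end
end

section
/- Let (X,d,μ) be an upper doubling metric measure space. Then there exists a positive constant c̃ such that for all balls B ⊂ R ⊂ S in X, δ(R,S) ≤ c̃ (1 + δ(B,S)); moreover, if B and R are concentric, then δ(R,S) ≤ δ(B,S). -/
/-!
Outside `R` a point `x` is at least as far from `x_R` as `x_B` is, so `d(x, x_B) ≤ 2 d(x, x_R)`.
One doubling step and one compatibility step then give
`λ(x_B, d(x, x_B)) ≤ C_λ² λ(x_R, d(x, x_R))`, and since `(2S) ∖ R ⊆ (2S) ∖ B` this yields
`δ(R, S) ≤ C_λ² δ(B, S)`. For concentric balls the integrands agree and only the domain shrinks.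
-/

open MeasureTheory Metric Set
open scoped ENNReal NNReal BigOperators

noncomputable section

variable {X : Type*} [MetricSpace X] [MeasurableSpace X] [BorelSpace X]

section

variable {Y : Type*} [MetricSpace Y] [MeasurableSpace Y] {μ : Measure Y} {lam : Y → ℝ → ℝ} {Cl : ℝ}

theorem UpperDoubling.lam_le_sq_mul (hud : UpperDoubling μ lam Cl) (hdc : DomCompat lam Cl)
    {x y z : Y} (hxz : 0 < dist x z) (hzy : dist z y ≤ dist x y) :
    lam z (dist x z) ≤ Cl ^ 2 * lam y (dist x y) := by
  obtain ⟨hCl, -, hmono, -, hhalf⟩ := hud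
  have hxz_le : dist x z ≤ 2 * dist x y := by linarith [dist_triangle x y z, dist_comm y z]
  have hxy : 0 < dist x y := by linarith
  calc lam z (dist x z) ≤ lam z (2 * dist x y) := hmono z _ _ hxz hxz_le
    _ ≤ Cl * lam z (dist x y) := by simpa using hhalf z (2 * dist x y) (by positivity)
    _ ≤ Cl * (Cl * lam y (dist x y)) := by
        gcongr
        exact hdc z y _ hxy hzy
    _ = Cl ^ 2 * lam y (dist x y) := by ring

theorem ballδ_le_of_ball_subset {x xS : Y} {r r' rS : ℝ} (h : ball x r ⊆ ball x r') :
    ballδ μ lam x r' xS rS ≤ ballδ μ lam x r xS rS :=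
  lintegral_mono_set (sdiff_subset_sdiff_right h)

variable [OpensMeasurableSpace Y]

theorem ballδ_le_sq_mul_of_ball_subset (hud : UpperDoubling μ lam Cl) (hdc : DomCompat lam Cl)
    {xB xR xS : Y} {rB rR rS : ℝ} (hrB : 0 < rB) (hBR : ball xB rB ⊆ ball xR rR) :
    ballδ μ lam xR rR xS rS ≤ ENNReal.ofReal (Cl ^ 2) * ballδ μ lam xB rB xS rS := by
  have hxBR : dist xB xR < rR := hBR (mem_ball_self hrB)
  have hpointwise : ∀ x ∈ ball xS (2 * rS) \ ball xR rR,
      ENNReal.ofReal (1 / lam xR (dist x xR)) ≤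
        ENNReal.ofReal (Cl ^ 2) * ENNReal.ofReal (1 / lam xB (dist x xB)) := by
    rintro x ⟨-, hxR⟩
    have hxB : 0 < dist x xB := by
      by_contra! h
      exact hxR (hBR (mem_ball.2 (h.trans_lt hrB)))
    have hxR_far : rR ≤ dist x xR := not_lt.1 hxR
    have hxR_pos : 0 < dist x xR := (dist_nonneg.trans_lt hxBR).trans_le hxR_far
    have hlam := hud.lam_le_sq_mul hdc hxB (hxBR.le.trans hxR_far)
    have hpos := hud.2.1
    rw [← ENNReal.ofReal_mul (sq_nonneg Cl), mul_one_div]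
    refine ENNReal.ofReal_le_ofReal ?_
    rw [div_le_div_iff₀ (hpos _ _ hxR_pos) (hpos _ _ hxB)]
    linarith
  calc ballδ μ lam xR rR xS rS
      ≤ ∫⁻ x in ball xS (2 * rS) \ ball xR rR,
          ENNReal.ofReal (Cl ^ 2) * ENNReal.ofReal (1 / lam xB (dist x xB)) ∂μ :=
        setLIntegral_mono' (measurableSet_ball.diff measurableSet_ball) hpointwise
    _ ≤ ∫⁻ x in ball xS (2 * rS) \ ball xB rB,
          ENNReal.ofReal (Cl ^ 2) * ENNReal.ofReal (1 / lam xB (dist x xB)) ∂μ :=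
        lintegral_mono_set (sdiff_subset_sdiff_right hBR)
    _ = ENNReal.ofReal (Cl ^ 2) * ballδ μ lam xB rB xS rS :=
        lintegral_const_mul' _ _ ENNReal.ofReal_ne_top

end

theorem delta_shrink
    (μ : Measure X) (lam : X → ℝ → ℝ) (Cl : ℝ)
    (hud : UpperDoubling μ lam Cl) (hdc : DomCompat lam Cl) :
    ∃ c : ℝ, 0 < c ∧
      ∀ (xB xR xS : X) (rB rR rS : ℝ), 0 < rB → 0 < rR → 0 < rS →
        ball xB rB ⊆ ball xR rR → ball xR rR ⊆ ball xS rS →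
        (ballδ μ lam xR rR xS rS ≤
          ENNReal.ofReal c * (1 + ballδ μ lam xB rB xS rS)) ∧
        (xB = xR → ballδ μ lam xR rR xS rS ≤ ballδ μ lam xB rB xS rS) := by
  refine ⟨Cl ^ 2, pow_pos (one_pos.trans hud.1) 2,
    fun xB xR xS rB rR rS hrB _ _ hBR _ => ⟨?_, ?_⟩⟩
  · exact (ballδ_le_sq_mul_of_ball_subset hud hdc hrB hBR).trans
      (mul_le_mul_right le_add_self _)
  · rintro rfl
    exact ballδ_le_of_ball_subset hBR

end
end

section
/- Let (X,d,μ) be an upper doubling metric measure space, and let α ∈ (1,∞) and β > C_λ^{log₂ α}. Then for every ball B ⊂ X there exists j ∈ ℤ≥0 such that α^j B is (α,β)-doubling. -/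
open MeasureTheory Metric Set
open scoped ENNReal NNReal BigOperators

noncomputable section

variable {X : Type*} [MetricSpace X] [MeasurableSpace X] [BorelSpace X]

/-!
If no ball `α ^ j B` is `(α, β)`-doubling, the measures `μ(α ^ (j + 1) B)` grow at least like
`β ^ j μ(αB)`, and `μ(αB) > 0`. On the other hand, iterating `λ(x, 2s) ≤ C_λ λ(x, s)` gives
`λ(x, α ^ j s) ≤ C_λ (C_λ ^ log₂ α) ^ j λ(x, s)`, so these measures grow at most like
`(C_λ ^ log₂ α) ^ j`, which is slower than `β ^ j`.
-/

section DoublingGrowth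

variable {f : ℝ → ℝ} {C : ℝ}

theorem le_pow_mul_of_le_mul_half (hC : 0 ≤ C) (hf : ∀ r, 0 < r → f r ≤ C * f (r / 2))
    (k : ℕ) {s : ℝ} (hs : 0 < s) : f (2 ^ k * s) ≤ C ^ k * f s := by
  induction k with
  | zero => simp
  | succ k ih =>
    calc f (2 ^ (k + 1) * s) ≤ C * f (2 ^ k * s) := by
          simpa [pow_succ, mul_right_comm] using hf (2 ^ (k + 1) * s) (by positivity)
      _ ≤ C * (C ^ k * f s) := mul_le_mul_of_nonneg_left ih hC
      _ = C ^ (k + 1) * f s := by ring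

theorem le_mul_rpow_mul_of_le_mul_half (hC : 1 ≤ C) (hmono : MonotoneOn f (Ioi 0))
    (hf : ∀ r, 0 < r → f r ≤ C * f (r / 2)) {t s : ℝ} (ht : 0 ≤ t) (hs : 0 < s)
    (hfs : 0 ≤ f s) : f (2 ^ t * s) ≤ C * C ^ t * f s := by
  have hceil : (2 : ℝ) ^ t ≤ 2 ^ ⌈t⌉₊ := by
    simpa using Real.rpow_le_rpow_of_exponent_le one_le_two (Nat.le_ceil t)
  calc f (2 ^ t * s) ≤ f (2 ^ ⌈t⌉₊ * s) :=
        hmono (by positivity : 0 < 2 ^ t * s) (by positivity : 0 < 2 ^ ⌈t⌉₊ * s) (by gcongr)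
    _ ≤ C ^ ⌈t⌉₊ * f s := le_pow_mul_of_le_mul_half (by linarith) hf _ hs
    _ ≤ C ^ (t + 1) * f s := by
        gcongr
        rw [← Real.rpow_natCast]
        exact Real.rpow_le_rpow_of_exponent_le hC (Nat.ceil_lt_add_one ht).le
    _ = C * C ^ t * f s := by rw [Real.rpow_add_one (by linarith)]; ring

theorem le_mul_rpow_logb_pow_mul (hC : 1 ≤ C) (hmono : MonotoneOn f (Ioi 0))
    (hf : ∀ r, 0 < r → f r ≤ C * f (r / 2)) {α : ℝ} (hα : 1 ≤ α) (j : ℕ) {s : ℝ} (hs : 0 < s)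
    (hfs : 0 ≤ f s) : f (α ^ j * s) ≤ C * (C ^ Real.logb 2 α) ^ j * f s := by
  have hαj : α ^ j = 2 ^ (Real.logb 2 α * j) := by
    rw [Real.rpow_mul zero_le_two, Real.rpow_logb two_pos one_lt_two.ne' (by linarith),
      Real.rpow_natCast]
  have hCj : (C ^ Real.logb 2 α) ^ j = C ^ (Real.logb 2 α * j) := by
    rw [Real.rpow_mul (by linarith), Real.rpow_natCast]
  rw [hαj, hCj]
  exact le_mul_rpow_mul_of_le_mul_half hC hmono hf
    (mul_nonneg (Real.logb_nonneg one_lt_two hα) j.cast_nonneg) hs hfs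

end DoublingGrowth

theorem pow_mul_le_of_forall_mul_le {M : Type*} [CommMonoid M] [Preorder M] [MulLeftMono M]
    {b : M} {m : ℕ → M} (h : ∀ j, b * m j ≤ m (j + 1)) (j : ℕ) : b ^ j * m 0 ≤ m j := by
  induction j with
  | zero => simp
  | succ j ih =>
    calc b ^ (j + 1) * m 0 = b * (b ^ j * m 0) := by rw [pow_succ', mul_assoc]
      _ ≤ b * m j := mul_le_mul_right ih b
      _ ≤ m (j + 1) := h j

theorem exists_ofReal_mul_pow_lt_pow_mul {q β A : ℝ} {c : ℝ≥0∞} (hq : 0 < q) (hqβ : q < β)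
    (hc₀ : c ≠ 0) (hc : c ≠ ⊤) : ∃ j : ℕ, ENNReal.ofReal (A * q ^ j) < ENNReal.ofReal β ^ j * c := by
  have hβ : 0 < β := hq.trans hqβ
  have hc_pos : 0 < c.toReal := ENNReal.toReal_pos hc₀ hc
  obtain ⟨j, hj⟩ := pow_unbounded_of_one_lt (A / c.toReal) ((one_lt_div hq).mpr hqβ)
  rw [div_pow, div_lt_div_iff₀ hc_pos (pow_pos hq j)] at hj
  refine ⟨j, ?_⟩
  rw [← ENNReal.ofReal_toReal hc, ← ENNReal.ofReal_pow hβ.le, ← ENNReal.ofReal_mul (by positivity)]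
  exact (ENNReal.ofReal_lt_ofReal_iff (by positivity)).2 hj

theorem exists_doubling_ball_general
    (μ : Measure X) (lam : X → ℝ → ℝ) (Cl : ℝ)
    (hud : UpperDoubling μ lam Cl)
    (α β : ℝ) (hα : 1 < α) (hβ : Cl ^ Real.logb 2 α < β) :
    ∀ (x : X) (r : ℝ), 0 < r → ∃ j : ℕ, IsDoubling μ α β x (α ^ j * r) := by
  obtain ⟨hCl, hpos, hmono, hball, hdbl⟩ := hud
  intro x r hr
  by_contra! hnot
  set q := Cl ^ Real.logb 2 α
  set m : ℕ → ℝ≥0∞ := fun j => μ (ball x (α ^ j * (α * r))) with hm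
  have hstep (j : ℕ) : ENNReal.ofReal β * m j ≤ m (j + 1) := by
    have e1 : α ^ j * (α * r) = α ^ (j + 1) * r := by ring
    have e2 : α ^ (j + 1) * (α * r) = α * (α ^ (j + 1) * r) := by ring
    simpa only [hm, e1, e2] using (not_le.mp (hnot (j + 1))).le
  -- `B` itself may be null, but `αB` is not, since `B` is not doubling
  have hm0 : 0 < m 0 := pos_of_gt <| by simpa [hm, IsDoubling] using hnot 0
  have hupper (j : ℕ) : m j ≤ ENNReal.ofReal (Cl * q ^ j * lam x (α * r)) :=
    (hball x _ (by positivity)).trans <| ENNReal.ofReal_le_ofReal <|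
      le_mul_rpow_logb_pow_mul hCl.le (fun s hs _ _ hst => hmono x s _ hs hst) (hdbl x) hα.le j
        (by positivity) (hpos x _ (by positivity)).le
  have hm0_top : m 0 ≠ ⊤ := ((hupper 0).trans_lt ENNReal.ofReal_lt_top).ne
  have hq : 0 < q := Real.rpow_pos_of_pos (by linarith) _
  obtain ⟨j, hj⟩ := exists_ofReal_mul_pow_lt_pow_mul (A := Cl * lam x (α * r)) hq hβ hm0.ne' hm0_top
  rw [mul_right_comm] at hj
  exact ((pow_mul_le_of_forall_mul_le hstep j).trans (hupper j)).not_gt hj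

theorem exists_doubling_ball
    (μ : Measure X) (lam : X → ℝ → ℝ) (Cl : ℝ)
    (hud : UpperDoubling μ lam Cl) (hdc : DomCompat lam Cl)
    (α β : ℝ) (hα : 1 < α) (hβ : Cl ^ Real.logb 2 α < β) :
    ∀ (x : X) (r : ℝ), 0 < r → ∃ j : ℕ, IsDoubling μ α β x (α ^ j * r) :=
  exists_doubling_ball_general μ lam Cl hud α β hα hβ

end
end

section
/- Let (X,d) be a geometrically doubling metric space with n := log₂ N₀, let μ be a Borel measure on X, and let α ∈ (1,∞) and β > α^n. Then for μ-almost every x ∈ X the following holds: for every r > 0 and every ε > 0 there exists j ∈ ℕ with α^{-j} r < ε such that the ball B(x, α^{-j} r) is (α,β)-doubling; that is, there exist (α,β)-doubling balls of the form B(x, α^{-j} r) with arbitrarily small radius. -/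
/-!
If for some `s > 0` none of the balls `B(x, α⁻ᵏ s)` is `(α,β)`-doubling, then
`μ B(x, α⁻ᵏ s) ≤ β⁻ᵏ μ B(x, s)`. Fix a ball `B(c, R)`, a lower bound `s₀ ≤ s` and a bound
`M ≥ μ B(x, s)`. Geometric doubling covers `B(c, R)` by `≲ (R αᵏ / s₀)ⁿ` balls of radius
`α⁻ᵏ s₀ / 2`, and each of them lies in `B(x, α⁻ᵏ s)` for any such `x` it contains. So these points
form a set of measure `≲ (αⁿ / β)ᵏ M` for every `k`, i.e. a null set since `β > αⁿ`; countably
many choices of `(R, s₀, M)` exhaust all points without small doubling balls.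
-/

open MeasureTheory Metric Set
open scoped ENNReal NNReal BigOperators

noncomputable section

variable {X : Type*} [MetricSpace X] [MeasurableSpace X] [BorelSpace X]

theorem ENNReal.eq_zero_of_forall_mul_pow_le {a b c C : ℝ≥0∞} (hb : b ≠ ⊤) (hcb : c < b)
    (hC : C ≠ ⊤) (h : ∀ k : ℕ, a * b ^ k ≤ C * c ^ k) : a = 0 := by
  have hb0 : b ≠ 0 := (pos_of_gt hcb).ne'
  have hq : c / b < 1 := ENNReal.div_lt_of_lt_mul (by rwa [one_mul])
  have hbound : ∀ k : ℕ, a ≤ C * (c / b) ^ k := fun k => by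
    rw [div_eq_mul_inv, mul_pow, ← ENNReal.inv_pow, ← mul_assoc, ← div_eq_mul_inv,
      ENNReal.le_div_iff_mul_le (.inl (pow_ne_zero k hb0)) (.inl (pow_ne_top hb))]
    exact h k
  have hlim :=
    ENNReal.Tendsto.const_mul (ENNReal.tendsto_pow_atTop_nhds_zero_of_lt_one hq) (.inr hC)
  rw [mul_zero] at hlim
  exact nonpos_iff_eq_zero.1 (ge_of_tendsto' hlim hbound)

omit [MeasurableSpace X] [BorelSpace X] in
theorem GeomDoubling.exists_finset_card_le_pow {N0 : ℕ} (hgd : GeomDoubling (X := X) N0)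
    (j : ℕ) (c : X) {R : ℝ} (hR : 0 < R) :
    ∃ t : Finset X, t.card ≤ N0 ^ j ∧ ball c R ⊆ ⋃ y ∈ t, ball y (R / 2 ^ j) := by
  classical
  induction j with
  | zero => exact ⟨{c}, by simp, by simp⟩
  | succ j ih =>
    obtain ⟨t, hcard, hcov⟩ := ih
    choose f hf_card hf_cov using fun y : X => hgd y (R / 2 ^ j) (by positivity)
    refine ⟨t.biUnion f, ?_, fun x hx => ?_⟩
    · calc (t.biUnion f).card ≤ ∑ y ∈ t, (f y).card := Finset.card_biUnion_le
        _ ≤ t.card * N0 := Finset.sum_le_card_nsmul _ _ _ fun y _ => hf_card y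
        _ ≤ N0 ^ (j + 1) := by rw [pow_succ]; exact Nat.mul_le_mul_right _ hcard
    · obtain ⟨y, hy, hxy⟩ := mem_iUnion₂.1 (hcov hx)
      obtain ⟨z, hz, hxz⟩ := mem_iUnion₂.1 (hf_cov y hxy)
      rw [div_div, ← pow_succ] at hxz
      exact mem_iUnion₂.2 ⟨z, Finset.mem_biUnion.2 ⟨y, hy, hz⟩, hxz⟩

omit [MeasurableSpace X] [BorelSpace X] in
theorem GeomDoubling.exists_finset_card_le_rpow {N0 : ℕ} (hgd : GeomDoubling (X := X) N0)
    (c : X) {R ρ : ℝ} (hρ : 0 < ρ) (hρR : ρ ≤ R) :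
    ∃ t : Finset X, (t.card : ℝ) ≤ (2 * R / ρ) ^ Real.logb 2 N0 ∧
      ball c R ⊆ ⋃ y ∈ t, ball y ρ := by
  have hR : 0 < R := hρ.trans_le hρR
  obtain ⟨m, hm_le, hm_lt⟩ := exists_nat_pow_near ((one_le_div hρ).2 hρR) one_lt_two
  obtain ⟨t, hcard, hcov⟩ := hgd.exists_finset_card_le_pow (m + 1) c hR
  have hrad : R / 2 ^ (m + 1) < ρ := by
    rwa [div_lt_iff₀ (by positivity), mul_comm, ← div_lt_iff₀ hρ]
  refine ⟨t, ?_, hcov.trans (iUnion₂_mono fun y _ => ball_subset_ball hrad.le)⟩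
  rcases N0.eq_zero_or_pos with rfl | hN0
  · have : t.card = 0 := by simpa using hcard
    rw [this, Nat.cast_zero]
    positivity
  have hn : 0 ≤ Real.logb 2 N0 := Real.logb_nonneg one_lt_two (by exact_mod_cast hN0)
  calc (t.card : ℝ) ≤ (N0 : ℝ) ^ (m + 1) := by exact_mod_cast hcard
    _ = ((2 : ℝ) ^ (m + 1)) ^ Real.logb 2 N0 := by
      rw [← Real.rpow_pow_comm zero_le_two, Real.rpow_logb two_pos (by norm_num)]
      exact_mod_cast hN0
    _ ≤ (2 * R / ρ) ^ Real.logb 2 N0 := by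
      gcongr
      rw [pow_succ, mul_comm, mul_div_assoc]
      gcongr

omit [BorelSpace X] in
theorem measure_ball_mul_pow_le_of_forall_not_isDoubling {μ : Measure X} {α β : ℝ} (hα : α ≠ 0)
    {x : X} {s : ℝ} (h : ∀ k : ℕ, ¬ IsDoubling μ α β x ((α ^ k)⁻¹ * s)) (k : ℕ) :
    μ (ball x ((α ^ k)⁻¹ * s)) * ENNReal.ofReal β ^ k ≤ μ (ball x s) := by
  induction k with
  | zero => simp
  | succ k ih =>
    have hstep := not_le.1 (h (k + 1))
    have hrad : α * ((α ^ (k + 1))⁻¹ * s) = (α ^ k)⁻¹ * s := by field_simp; ring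
    rw [hrad] at hstep
    calc μ (ball x ((α ^ (k + 1))⁻¹ * s)) * ENNReal.ofReal β ^ (k + 1)
        = ENNReal.ofReal β * μ (ball x ((α ^ (k + 1))⁻¹ * s)) * ENNReal.ofReal β ^ k := by ring
      _ ≤ μ (ball x ((α ^ k)⁻¹ * s)) * ENNReal.ofReal β ^ k := by gcongr
      _ ≤ μ (ball x s) := ih

omit [BorelSpace X] in
theorem measure_ball_inter_setOf_forall_not_isDoubling_mul_pow_le {μ : Measure X} {α β : ℝ}
    (hα : 0 < α) {s₀ : ℝ} {M : ℝ≥0∞} (k : ℕ) (y : X) {ρ : ℝ} (hρ : 2 * ρ ≤ (α ^ k)⁻¹ * s₀) :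
    μ (ball y ρ ∩ {x | ∃ s, s₀ ≤ s ∧ μ (ball x s) ≤ M ∧
      ∀ k : ℕ, ¬ IsDoubling μ α β x ((α ^ k)⁻¹ * s)}) * ENNReal.ofReal β ^ k ≤ M := by
  set F := {x | ∃ s, s₀ ≤ s ∧ μ (ball x s) ≤ M ∧ ∀ k : ℕ, ¬ IsDoubling μ α β x ((α ^ k)⁻¹ * s)}
  rcases (ball y ρ ∩ F).eq_empty_or_nonempty with hempty | ⟨x, hxy, s, hs, hsM, hnd⟩
  · simp [hempty]
  have hsub : ball y ρ ⊆ ball x ((α ^ k)⁻¹ * s) := by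
    refine ball_subset_ball' ?_
    have : (α ^ k)⁻¹ * s₀ ≤ (α ^ k)⁻¹ * s := by gcongr
    linarith [mem_ball'.1 hxy]
  calc μ (ball y ρ ∩ F) * ENNReal.ofReal β ^ k
      ≤ μ (ball x ((α ^ k)⁻¹ * s)) * ENNReal.ofReal β ^ k := by
        gcongr
        exact inter_subset_left.trans hsub
    _ ≤ μ (ball x s) := measure_ball_mul_pow_le_of_forall_not_isDoubling hα.ne' hnd k
    _ ≤ M := hsM

omit [BorelSpace X] in
theorem measure_ball_inter_setOf_forall_not_isDoubling_eq_zero {μ : Measure X} {N0 : ℕ}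
    (hgd : GeomDoubling (X := X) N0) {α β : ℝ} (hα : 1 < α) (hβ : α ^ Real.logb 2 N0 < β)
    (c : X) {R s₀ : ℝ} (hs₀ : 0 < s₀) (hs₀R : s₀ ≤ R) {M : ℝ≥0∞} (hM : M ≠ ⊤) :
    μ (ball c R ∩ {x | ∃ s, s₀ ≤ s ∧ μ (ball x s) ≤ M ∧
      ∀ k : ℕ, ¬ IsDoubling μ α β x ((α ^ k)⁻¹ * s)}) = 0 := by
  set F := {x | ∃ s, s₀ ≤ s ∧ μ (ball x s) ≤ M ∧ ∀ k : ℕ, ¬ IsDoubling μ α β x ((α ^ k)⁻¹ * s)}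
  set n := Real.logb 2 N0 with hn
  have hR : 0 < R := hs₀.trans_le hs₀R
  have hα0 : 0 < α := zero_lt_one.trans hα
  have hβ0 : 0 < β := (Real.rpow_pos_of_pos hα0 n).trans hβ
  refine ENNReal.eq_zero_of_forall_mul_pow_le (c := ENNReal.ofReal (α ^ n))
    (C := ENNReal.ofReal ((4 * R / s₀) ^ n) * M) ENNReal.ofReal_ne_top
    ((ENNReal.ofReal_lt_ofReal_iff hβ0).2 hβ) (ENNReal.mul_ne_top ENNReal.ofReal_ne_top hM)
    fun k => ?_
  set ρ := (α ^ k)⁻¹ * s₀ / 2 with hρ_def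
  have hρR : ρ ≤ R := by
    have : (α ^ k)⁻¹ * s₀ ≤ s₀ :=
      mul_le_of_le_one_left hs₀.le (inv_le_one_of_one_le₀ (one_le_pow₀ hα.le))
    linarith
  obtain ⟨t, hcard, hcov⟩ := hgd.exists_finset_card_le_rpow c (by positivity) hρR
  rw [← hn] at hcard
  have hcard' : (t.card : ℝ≥0∞) ≤
      ENNReal.ofReal ((4 * R / s₀) ^ n) * ENNReal.ofReal (α ^ n) ^ k := by
    rw [← ENNReal.ofReal_pow (by positivity), ← ENNReal.ofReal_mul (by positivity),
      ← ENNReal.ofReal_natCast]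
    refine ENNReal.ofReal_le_ofReal (hcard.trans_eq ?_)
    rw [Real.rpow_pow_comm hα0.le, ← Real.mul_rpow (by positivity) (by positivity), hρ_def]
    congr 1
    field_simp
    ring
  have hcov' : ball c R ∩ F ⊆ ⋃ y ∈ t, ball y ρ ∩ F := fun x hx => by
    obtain ⟨y, hy, hxy⟩ := mem_iUnion₂.1 (hcov hx.1)
    exact mem_iUnion₂.2 ⟨y, hy, hxy, hx.2⟩
  calc μ (ball c R ∩ F) * ENNReal.ofReal β ^ k
      ≤ (∑ y ∈ t, μ (ball y ρ ∩ F)) * ENNReal.ofReal β ^ k := by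
        gcongr
        exact (measure_mono hcov').trans (measure_biUnion_finset_le t _)
    _ = ∑ y ∈ t, μ (ball y ρ ∩ F) * ENNReal.ofReal β ^ k := Finset.sum_mul _ _ _
    _ ≤ t.card * M := by
        simpa only [nsmul_eq_mul] using Finset.sum_le_card_nsmul t _ M fun y _ =>
          measure_ball_inter_setOf_forall_not_isDoubling_mul_pow_le hα0 k y (by linarith)
    _ ≤ ENNReal.ofReal ((4 * R / s₀) ^ n) * ENNReal.ofReal (α ^ n) ^ k * M := by gcongr
    _ = ENNReal.ofReal ((4 * R / s₀) ^ n) * M * ENNReal.ofReal (α ^ n) ^ k :=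
        mul_right_comm _ _ _

omit [BorelSpace X] in
theorem measure_setOf_forall_not_isDoubling_eq_zero (μ : Measure X) {N0 : ℕ}
    (hgd : GeomDoubling (X := X) N0) {α β : ℝ} (hα : 1 < α) (hβ : α ^ Real.logb 2 N0 < β) :
    μ {x | ∃ s > 0, ∀ k : ℕ, ¬ IsDoubling μ α β x ((α ^ k)⁻¹ * s)} = 0 := by
  rcases isEmpty_or_nonempty X with hX | ⟨⟨c⟩⟩
  · simp [Set.eq_empty_of_isEmpty]
  have hβ0 : 0 < β := (Real.rpow_pos_of_pos (zero_lt_one.trans hα) _).trans hβ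
  refine measure_mono_null ?_ <| measure_iUnion_null fun m : ℕ => measure_iUnion_null
    fun M : ℕ => measure_iUnion_null fun R : ℕ =>
      measure_ball_inter_setOf_forall_not_isDoubling_eq_zero (μ := μ) hgd hα hβ c (R := R + 1)
        (s₀ := 1 / (m + 1)) (by positivity) ?_ (ENNReal.natCast_ne_top M)
  · rintro x ⟨s, hs, hnd⟩
    have hfin : μ (ball x s) ≠ ⊤ := fun htop => hnd 0 <| by
      simp [IsDoubling, htop, ENNReal.mul_top, hβ0]
    obtain ⟨m, hm⟩ := exists_nat_one_div_lt hs
    obtain ⟨M, hM⟩ := ENNReal.exists_nat_gt hfin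
    obtain ⟨R, hR⟩ := exists_nat_gt (dist x c)
    simp only [mem_iUnion]
    exact ⟨m, M, R, mem_ball.2 (by linarith), s, hm.le, hM.le, hnd⟩
  · exact ((div_le_one (by positivity)).2 (by simp)).trans (by simp)

omit [BorelSpace X] in
theorem exists_pow_inv_mul_lt_and_isDoubling {μ : Measure X} {α β : ℝ} (hα : 1 < α) {x : X}
    (h : ∀ s > 0, ∃ k : ℕ, IsDoubling μ α β x ((α ^ k)⁻¹ * s)) {r ε : ℝ} (hr : 0 < r)
    (hε : 0 < ε) : ∃ j : ℕ, (α ^ j)⁻¹ * r < ε ∧ IsDoubling μ α β x ((α ^ j)⁻¹ * r) := by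
  have hα0 : 0 < α := zero_lt_one.trans hα
  obtain ⟨J, hJ⟩ := pow_unbounded_of_one_lt (r / ε) hα
  obtain ⟨k, hk⟩ := h ((α ^ J)⁻¹ * r) (by positivity)
  have hrad : (α ^ (k + J))⁻¹ * r = (α ^ k)⁻¹ * ((α ^ J)⁻¹ * r) := by
    rw [pow_add, mul_inv, mul_assoc]
  refine ⟨k + J, ?_, hrad ▸ hk⟩
  calc (α ^ (k + J))⁻¹ * r ≤ (α ^ J)⁻¹ * r := by
        gcongr
        · exact hα.le
        · omega
    _ < ε := by
        rw [inv_mul_lt_iff₀ (by positivity)]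
        rwa [div_lt_iff₀ hε] at hJ

theorem exists_small_doubling_balls_ae
    (μ : Measure X) (N0 : ℕ) (hgd : GeomDoubling (X := X) N0)
    (α β : ℝ) (hα : 1 < α) (hβ : (α : ℝ) ^ Real.logb 2 N0 < β) :
    ∀ᵐ x ∂μ, ∀ r : ℝ, 0 < r → ∀ ε : ℝ, 0 < ε →
      ∃ j : ℕ, (α ^ j)⁻¹ * r < ε ∧ IsDoubling μ α β x ((α ^ j)⁻¹ * r) := by
  filter_upwards [measure_eq_zero_iff_ae_notMem.1
    (measure_setOf_forall_not_isDoubling_eq_zero μ hgd hα hβ)] with x hx r hr ε hε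
  simp only [not_exists, not_and, not_forall, not_not] at hx
  exact exists_pow_inv_mul_lt_and_isDoubling hα hx hr hε

end
end
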